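/- Let G be a compact Hausdorff topological group acting continuously on a Hausdorff space X with finite fixed point set, |X^G| < ∞. Then every G-categorical subset of X contains at most one fixed point, all fixed points are isolated, and |X^G| = cat_G(X^G) = cat(X^G). -/

import Mathlib

open Set unitInterval

/-- The orbit of a point under a `SMul` of `G` on `X`. -/
def smulOrbit (G : Type*) {X : Type*} [SMul G X] (x : X) : Set X :=
  Set.range fun g : G => g • x

/-- A subset `U` of a `G`-space `X` is `G`-invariant if `GU ⊆ U`. -/
def IsInvariantSet (G : Type*) {X : Type*} [SMul G X] (U : Set X) : Prop :=
  ∀ g : G, ∀ x ∈ U, g • x ∈ U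

/-- `H : U × [0,1] → X` is a `G`-homotopy: it is continuous and
`g • H(x,t) = H(g • x, t)` whenever both sides make sense. -/
def IsGHomotopy (G : Type*) {X : Type*} [SMul G X] [TopologicalSpace X]
    (U : Set X) (H : U × I → X) : Prop :=
  Continuous H ∧
    ∀ (g : G) (x : U) (hgx : g • (x : X) ∈ U) (t : I),
      g • H (x, t) = H (⟨g • (x : X), hgx⟩, t)

/-- A `G`-invariant open subset `U` of `X` is `G`-categorical if there is a `G`-homotopy
`H : U × [0,1] → X` starting at the inclusion and ending inside a single orbit. -/
def IsGCategorical (G : Type*) {X : Type*} [SMul G X] [TopologicalSpace X] (U : Set X) : Prop :=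
  IsOpen U ∧ IsInvariantSet G U ∧
    ∃ H : U × I → X, IsGHomotopy G U H ∧ (∀ x : U, H (x, 0) = x) ∧
      ∃ z : X, ∀ x : U, H (x, 1) ∈ smulOrbit G z

/-- The equivariant Lusternik–Schnirelmann category of a `G`-space: the least number of
`G`-categorical open sets covering `X`, as an element of `ℕ∞` (`⊤` if no finite cover exists). -/
noncomputable def eqvCat (G X : Type*) [SMul G X] [TopologicalSpace X] : ℕ∞ :=
  sInf {c : ℕ∞ | ∃ n : ℕ, c = n ∧ ∃ U : Fin n → Set X,
    (∀ i, IsGCategorical G (U i)) ∧ (⋃ i, U i) = Set.univ}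

/-- A subset `U` of `X` is categorical if it is open and contractible to a point within `X`. -/
def IsCategoricalSet {X : Type*} [TopologicalSpace X] (U : Set X) : Prop :=
  IsOpen U ∧ ∃ H : U × I → X, Continuous H ∧ (∀ x : U, H (x, 0) = x) ∧
    ∃ p : X, ∀ x : U, H (x, 1) = p

/-- The (classical) Lusternik–Schnirelmann category of `X`, valued in `ℕ∞`. -/
noncomputable def LScat (X : Type*) [TopologicalSpace X] : ℕ∞ :=
  sInf {c : ℕ∞ | ∃ n : ℕ, c = n ∧ ∃ U : Fin n → Set X,
    (∀ i, IsCategoricalSet (U i)) ∧ (⋃ i, U i) = Set.univ}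

/-- The fixed point set `X^G`. -/
def fixedPts (G X : Type*) [SMul G X] : Set X := {x : X | ∀ g : G, g • x = x}

/-- The (trivial) restriction of the `G`-action to the fixed point set `X^G`. -/
def fixedSMul (G X : Type*) [SMul G X] : SMul G ↥(fixedPts G X) := ⟨fun _ x => x⟩

/-!
A `G`-homotopy moves a fixed point only through fixed points, since `g • H(x, t) = H(g • x, t)`.
When `X^G` is finite it is discrete (`X` being T1), so the track of a fixed point, a path in
`X^G`, is constant; hence every fixed point of a `G`-categorical set lies in the final orbit
`G • z`, and an orbit contains at most one fixed point. On `X^G` itself the action is trivial,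
so by the same argument categorical and `G`-categorical sets are subsingletons, while singletons
are open and both categorical and `G`-categorical: both categories are `|X^G|`.
-/

lemma apply_one_eq_of_mapsTo_finite {Y : Type*} [TopologicalSpace Y] [T1Space Y] {U : Set Y}
    {H : U × I → Y} (hH : Continuous H) (hH₀ : ∀ x : U, H (x, 0) = x) {S : Set Y}
    (hS : S.Finite) {x : U} (hxS : ∀ t, H (x, t) ∈ S) : H (x, 1) = x :=
  (hH₀ x) ▸ isPreconnected_univ.constant_of_mapsTo hS.isDiscrete
    (hH.comp (continuous_const.prodMk continuous_id)).continuousOn (fun t _ => hxS t)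
    (mem_univ 1) (mem_univ 0)

lemma IsGHomotopy.apply_mem_fixedPts {G X : Type*} [SMul G X] [TopologicalSpace X] {U : Set X}
    {H : U × I → X} (hH : IsGHomotopy G U H) {x : U} (hx : (x : X) ∈ fixedPts G X) (t : I) :
    H (x, t) ∈ fixedPts G X := fun g => by
  have hgx : g • (x : X) ∈ U := (hx g).symm ▸ x.2
  rw [hH.2 g x hgx t, show (⟨g • (x : X), hgx⟩ : U) = x from Subtype.ext (hx g)]

lemma IsGCategorical.exists_inter_fixedPts_subset_smulOrbit {G X : Type*} [SMul G X]
    [TopologicalSpace X] [T1Space X] (hfin : (fixedPts G X).Finite) {U : Set X}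
    (hU : IsGCategorical G U) : ∃ z, U ∩ fixedPts G X ⊆ smulOrbit G z := by
  obtain ⟨-, -, H, hH, hH₀, z, hH₁⟩ := hU
  refine ⟨z, fun x ⟨hxU, hx⟩ => ?_⟩
  have hx₁ : H (⟨x, hxU⟩, 1) = x :=
    apply_one_eq_of_mapsTo_finite hH.1 hH₀ hfin (hH.apply_mem_fixedPts (x := ⟨x, hxU⟩) hx)
  exact hx₁ ▸ hH₁ ⟨x, hxU⟩

lemma smulOrbit_inter_fixedPts_subsingleton {G X : Type*} [Group G] [MulAction G X] (z : X) :
    (smulOrbit G z ∩ fixedPts G X).Subsingleton := by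
  rintro _ ⟨⟨g, rfl⟩, hg⟩ _ ⟨⟨h, rfl⟩, -⟩
  calc g • z = (h * g⁻¹) • g • z := (hg _).symm
    _ = h • z := by rw [smul_smul, inv_mul_cancel_right]

lemma IsGCategorical.inter_fixedPts_subsingleton {G X : Type*} [Group G] [MulAction G X]
    [TopologicalSpace X] [T1Space X] (hfin : (fixedPts G X).Finite) {U : Set X}
    (hU : IsGCategorical G U) : (U ∩ fixedPts G X).Subsingleton := by
  obtain ⟨z, hz⟩ := hU.exists_inter_fixedPts_subset_smulOrbit hfin
  exact (smulOrbit_inter_fixedPts_subsingleton z).anti (subset_inter hz inter_subset_right)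

noncomputable def coverNumber {Y : Type*} (P : Set Y → Prop) : ℕ∞ :=
  sInf {c : ℕ∞ | ∃ n : ℕ, c = n ∧ ∃ U : Fin n → Set Y, (∀ i, P (U i)) ∧ (⋃ i, U i) = univ}

lemma eqvCat_eq_coverNumber (G X : Type*) [SMul G X] [TopologicalSpace X] :
    eqvCat G X = coverNumber (IsGCategorical G (X := X)) :=
  rfl

lemma LScat_eq_coverNumber (X : Type*) [TopologicalSpace X] :
    LScat X = coverNumber (IsCategoricalSet (X := X)) :=
  rfl

lemma natCard_le_of_iUnion_subsingleton_eq_univ {Y : Type*} {n : ℕ} {U : Fin n → Set Y}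
    (hU : ∀ i, (U i).Subsingleton) (hcov : (⋃ i, U i) = univ) : Nat.card Y ≤ n := by
  choose idx hidx using fun y : Y => mem_iUnion.mp (hcov ▸ mem_univ y)
  have hinj : Function.Injective idx := fun a b hab => hU (idx a) (hidx a) (hab ▸ hidx b)
  simpa using Nat.card_le_card_of_injective idx hinj

lemma coverNumber_eq_natCard {Y : Type*} [Finite Y] {P : Set Y → Prop}
    (hsub : ∀ U, P U → U.Subsingleton) (hsingleton : ∀ y, P {y}) :
    coverNumber P = Nat.card Y := by
  refine le_antisymm (sInf_le ⟨Nat.card Y, rfl, fun i => {(Finite.equivFin Y).symm i},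
    fun i => hsingleton _, eq_univ_of_forall fun y => mem_iUnion.mpr ⟨Finite.equivFin Y y, ?_⟩⟩)
    (le_sInf ?_)
  · simp
  · rintro _ ⟨n, rfl, U, hP, hcov⟩
    exact_mod_cast natCard_le_of_iUnion_subsingleton_eq_univ (fun i => hsub _ (hP i)) hcov

section FiniteSpace

variable {Y : Type*} [TopologicalSpace Y] [Finite Y] [T1Space Y]

lemma IsCategoricalSet.subsingleton {U : Set Y} (hU : IsCategoricalSet U) : U.Subsingleton := by
  obtain ⟨-, H, hH, hH₀, p, hH₁⟩ := hU
  have hp : ∀ x : U, (x : Y) = p := fun x =>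
    (apply_one_eq_of_mapsTo_finite hH hH₀ finite_univ fun _ => mem_univ _).symm.trans (hH₁ x)
  exact fun a ha b hb => (hp ⟨a, ha⟩).trans (hp ⟨b, hb⟩).symm

lemma isCategoricalSet_singleton (y : Y) : IsCategoricalSet {y} :=
  ⟨isOpen_discrete _, fun _ => y, continuous_const, fun x => x.2.symm, y, fun _ => rfl⟩

lemma LScat_eq_natCard : LScat Y = Nat.card Y := by
  rw [LScat_eq_coverNumber]
  exact coverNumber_eq_natCard (fun _ => IsCategoricalSet.subsingleton) isCategoricalSet_singleton

variable {G : Type*} [SMul G Y] (htriv : ∀ (g : G) (y : Y), g • y = y)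
include htriv

lemma IsGCategorical.subsingleton_of_smul_eq_self {U : Set Y} (hU : IsGCategorical G U) :
    U.Subsingleton := by
  obtain ⟨-, -, H, hH, hH₀, z, hH₁⟩ := hU
  have hz : ∀ x : U, (x : Y) = z := fun x => by
    obtain ⟨g, hg⟩ := hH₁ x
    rw [← apply_one_eq_of_mapsTo_finite hH.1 hH₀ finite_univ fun _ => mem_univ _, ← hg]
    exact htriv g z
  exact fun a ha b hb => (hz ⟨a, ha⟩).trans (hz ⟨b, hb⟩).symm

lemma isGCategorical_singleton_of_smul_eq_self [Nonempty G] (y : Y) : IsGCategorical G {y} :=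
  ⟨isOpen_discrete _, fun g x hx => (htriv g x).symm ▸ hx, fun _ => y,
    ⟨continuous_const, fun g _ _ _ => htriv g y⟩, fun x => x.2.symm, y,
    fun _ => ⟨Classical.arbitrary G, htriv _ y⟩⟩

lemma eqvCat_eq_natCard_of_smul_eq_self [Nonempty G] : eqvCat G Y = Nat.card Y := by
  rw [eqvCat_eq_coverNumber]
  exact coverNumber_eq_natCard (fun _ => IsGCategorical.subsingleton_of_smul_eq_self htriv)
    (isGCategorical_singleton_of_smul_eq_self htriv)

end FiniteSpace

theorem finite_fixedPts_eqvCat_general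
    {G X : Type*} [Group G] [TopologicalSpace X] [T2Space X] [MulAction G X]
    (hfin : (fixedPts G X).Finite) :
    (∀ U : Set X, IsGCategorical G U → (U ∩ fixedPts G X).Subsingleton) ∧
    (∀ x₀ ∈ fixedPts G X, ∃ V : Set X, IsOpen V ∧ x₀ ∈ V ∧ V ∩ fixedPts G X = {x₀}) ∧
    ((fixedPts G X).ncard : ℕ∞) = @eqvCat G ↥(fixedPts G X) (fixedSMul G X) inferInstance ∧
    @eqvCat G ↥(fixedPts G X) (fixedSMul G X) inferInstance = LScat ↥(fixedPts G X) := by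
  have : Finite (fixedPts G X) := hfin.to_subtype
  let := fixedSMul G X
  have hcat : eqvCat G (fixedPts G X) = Nat.card (fixedPts G X) :=
    eqvCat_eq_natCard_of_smul_eq_self fun _ _ => rfl
  refine ⟨fun U hU => hU.inter_fixedPts_subsingleton hfin, fun x₀ hx₀ => ?_, ?_, ?_⟩
  · obtain ⟨V, hV, hVx₀⟩ := isDiscrete_iff_forall_mem_exists_isOpen.mp hfin.isDiscrete x₀ hx₀
    exact ⟨V, hV, (hVx₀.ge (mem_singleton x₀)).1, hVx₀⟩
  · rw [hcat, Nat.card_coe_set_eq]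
  · rw [hcat, LScat_eq_natCard]

/-- Let `G` be a compact Hausdorff topological group acting continuously on a
Hausdorff space `X` with finite fixed point set `|X^G| < ∞`. Then every `G`-categorical subset
of `X` contains at most one fixed point, all fixed points are isolated, and
`|X^G| = cat_G(X^G) = cat(X^G)`. -/
theorem finite_fixedPts_eqvCat
    {G X : Type*} [Group G] [TopologicalSpace G] [IsTopologicalGroup G] [CompactSpace G]
    [T2Space G] [TopologicalSpace X] [T2Space X] [MulAction G X] [ContinuousSMul G X]
    (hfin : (fixedPts G X).Finite) :
    (∀ U : Set X, IsGCategorical G U → (U ∩ fixedPts G X).Subsingleton) ∧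
    (∀ x₀ ∈ fixedPts G X, ∃ V : Set X, IsOpen V ∧ x₀ ∈ V ∧ V ∩ fixedPts G X = {x₀}) ∧
    ((fixedPts G X).ncard : ℕ∞) = @eqvCat G ↥(fixedPts G X) (fixedSMul G X) inferInstance ∧
    @eqvCat G ↥(fixedPts G X) (fixedSMul G X) inferInstance = LScat ↥(fixedPts G X) :=
  finite_fixedPts_eqvCat_general hfin
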